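/- arXiv:1208.1707 — 3 statements merged into one kernel-verified Lean document; each statement's English description precedes it below -/
import Mathlib

section
/- Let δ, B₁, k be real numbers with kB₁ < 0 and (kB₁)² > (δ + B₁)². Set ω = √((kB₁)² - (δ + B₁)²) and r = arccos((δ + B₁)/(kB₁)) / ω. Then r > 0 and both λ = iω and λ = -iω satisfy the characteristic equation λ + δ + B₁ = kB₁·exp(-λr). In particular, for parameters on the surface defined by r = arccos((δ+B₁)/(kB₁)) / √((kB₁)² - (δ+B₁)²), the characteristic equation has a pair of purely imaginary roots ±iω. -/
/-- If `kB₁ < 0` and `(kB₁)² > (δ+B₁)²`, then with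
`ω = √((kB₁)² - (δ+B₁)²)` and `r = arccos((δ+B₁)/(kB₁))/ω` one has `r > 0`
and both `iω` and `-iω` are roots of the characteristic equation
`λ + δ + B₁ = kB₁·e^{-λr}`. -/
theorem stmt5 (δ B₁ k : ℝ) (hkB : k * B₁ < 0)
    (hsq : (k * B₁) ^ 2 > (δ + B₁) ^ 2)
    (ω r : ℝ)
    (hω : ω = Real.sqrt ((k * B₁) ^ 2 - (δ + B₁) ^ 2))
    (hr : r = Real.arccos ((δ + B₁) / (k * B₁)) / ω) :
    0 < r ∧
    (Complex.I * (ω : ℂ) + (δ : ℂ) + (B₁ : ℂ) =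
      (k : ℂ) * (B₁ : ℂ) * Complex.exp (-(Complex.I * (ω : ℂ)) * (r : ℂ))) ∧
    (-(Complex.I * (ω : ℂ)) + (δ : ℂ) + (B₁ : ℂ) =
      (k : ℂ) * (B₁ : ℂ) * Complex.exp (-(-(Complex.I * (ω : ℂ))) * (r : ℂ))) := by
  set a := δ + B₁ with ha
  set b := k * B₁ with hb
  have hb0 : b < 0 := hkB
  have hbne : b ≠ 0 := ne_of_lt hb0
  have hω0 : 0 < ω := by
    rw [hω]; exact Real.sqrt_pos.mpr (by linarith)
  have hωsq : ω ^ 2 = b ^ 2 - a ^ 2 := by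
    rw [hω]; exact Real.sq_sqrt (by linarith)
  have hdiv : (a / b) ^ 2 < 1 := by
    rw [div_pow, div_lt_one (by positivity)]; exact hsq
  have h1' : -1 < a / b ∧ a / b < 1 := ⟨by nlinarith, by nlinarith⟩
  set θ := Real.arccos (a / b) with hθ
  have hθpos : 0 < θ := Real.arccos_pos.mpr h1'.2
  have hrpos : 0 < r := by rw [hr]; exact div_pos hθpos hω0
  have hcos : Real.cos θ = a / b := Real.cos_arccos h1'.1.le h1'.2.le
  have hsin : Real.sin θ = ω / (-b) := by
    rw [hθ, Real.sin_arccos]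
    have h2 : 1 - (a / b) ^ 2 = (ω / (-b)) ^ 2 := by
      field_simp
      nlinarith [hωsq]
    rw [h2, Real.sqrt_sq (div_nonneg hω0.le (by linarith))]
  have hωr : ω * r = θ := by
    rw [hr]; field_simp
  have e1 : -(Complex.I * (ω : ℂ)) * (r : ℂ) = ((-θ : ℝ) : ℂ) * Complex.I := by
    rw [← hωr]; push_cast; ring
  have e2 : -(-(Complex.I * (ω : ℂ))) * (r : ℂ) = ((θ : ℝ) : ℂ) * Complex.I := by
    rw [← hωr]; push_cast; ring
  refine ⟨hrpos, ?_, ?_⟩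
  · rw [e1, Complex.exp_mul_I, ← Complex.ofReal_cos, ← Complex.ofReal_sin,
      Real.cos_neg, Real.sin_neg, hcos, hsin]
    have hk0 : k ≠ 0 := fun h => by simp [hb, h] at hbne
    have hB0 : B₁ ≠ 0 := fun h => by simp [hb, h] at hbne
    have hk : (k : ℂ) ≠ 0 := by exact_mod_cast hk0
    have hB : (B₁ : ℂ) ≠ 0 := by exact_mod_cast hB0
    simp only [ha, hb]
    push_cast
    field_simp
    ring
  · rw [e2, Complex.exp_mul_I, ← Complex.ofReal_cos, ← Complex.ofReal_sin,
      hcos, hsin]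
    have hk0 : k ≠ 0 := fun h => by simp [hb, h] at hbne
    have hB0 : B₁ ≠ 0 := fun h => by simp [hb, h] at hbne
    have hk : (k : ℂ) ≠ 0 := by exact_mod_cast hk0
    have hB : (B₁ : ℂ) ≠ 0 := by exact_mod_cast hB0
    simp only [ha, hb]
    push_cast
    field_simp
    ring
end

section
/- Let b₁, b₂ ∈ ℝ with b₁ < 0 and b₂² + 4b₁ < 0, and let u : ℝ → ℂ be a function such that at every t ∈ ℝ, u has derivative (b₁ + i)·u(t) + b₂·u(t)·|u(t)|² - u(t)·|u(t)|⁴. Then at every t with u(t) ≠ 0, the function t ↦ |u(t)|² has strictly negative derivative; i.e., away from the origin the squared modulus of any solution is strictly decreasing, so the origin is attractive (zone 1 of the Bautin bifurcation diagram). -/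
/-- For `b₁ < 0` and `b₂² + 4b₁ < 0`, along any solution of the truncated
Bautin normal form `u̇ = (b₁+i)u + b₂u|u|² - u|u|⁴`, the squared modulus
`|u(t)|²` has strictly negative derivative wherever `u(t) ≠ 0`: the origin is
attractive (zone 1). -/
theorem stmt13 (b₁ b₂ : ℝ) (hb₁ : b₁ < 0) (hdisc : b₂ ^ 2 + 4 * b₁ < 0)
    (u : ℝ → ℂ)
    (hu : ∀ t : ℝ, HasDerivAt u
      (((b₁ : ℂ) + Complex.I) * u t + (b₂ : ℂ) * u t * ((‖u t‖) ^ 2 : ℝ)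
        - u t * ((‖u t‖) ^ 4 : ℝ)) t) :
    ∀ t : ℝ, u t ≠ 0 →
      ∃ d : ℝ, HasDerivAt (fun s => (‖u s‖) ^ 2) d t ∧ d < 0 := by
  intro t ht
  set v := ((b₁ : ℂ) + Complex.I) * u t + (b₂ : ℂ) * u t * ((‖u t‖) ^ 2 : ℝ)
      - u t * ((‖u t‖) ^ 4 : ℝ) with hv
  have hre : HasDerivAt (fun s => (u s).re) v.re t :=
    (Complex.reCLM.hasFDerivAt.comp_hasDerivAt t (hu t))
  have him : HasDerivAt (fun s => (u s).im) v.im t :=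
    (Complex.imCLM.hasFDerivAt.comp_hasDerivAt t (hu t))
  have hsq : HasDerivAt (fun s => (u s).re ^ 2 + (u s).im ^ 2)
      (2 * (u t).re ^ 1 * v.re + 2 * (u t).im ^ 1 * v.im) t :=
    ((hre.pow 2).add (him.pow 2)).congr_deriv (by push_cast; ring)
  have heq : (fun s => (‖u s‖) ^ 2) = fun s => (u s).re ^ 2 + (u s).im ^ 2 := by
    funext s
    rw [Complex.sq_norm, Complex.normSq_apply]; ring
  refine ⟨_, heq ▸ hsq, ?_⟩
  set a := (u t).re
  set b := (u t).im
  have hr2 : (‖u t‖) ^ 2 = a ^ 2 + b ^ 2 := by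
    rw [Complex.sq_norm, Complex.normSq_apply]; ring
  have hr4 : (‖u t‖) ^ 4 = (a ^ 2 + b ^ 2) ^ 2 := by
    rw [show (4:ℕ) = 2*2 from rfl, pow_mul, hr2]
  have hvre : v.re = b₁ * a - b + b₂ * a * (a ^ 2 + b ^ 2) - a * (a ^ 2 + b ^ 2) ^ 2 := by
    rw [hv]
    simp only [Complex.add_re, Complex.sub_re, Complex.mul_re, Complex.add_im, Complex.mul_im,
      Complex.ofReal_re, Complex.ofReal_im, Complex.I_re, Complex.I_im]
    rw [hr2, hr4]; ring
  have hvim : v.im = b₁ * b + a + b₂ * b * (a ^ 2 + b ^ 2) - b * (a ^ 2 + b ^ 2) ^ 2 := by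
    rw [hv]
    simp only [Complex.add_im, Complex.sub_im, Complex.mul_re, Complex.mul_im, Complex.add_re,
      Complex.ofReal_re, Complex.ofReal_im, Complex.I_re, Complex.I_im]
    rw [hr2, hr4]; ring
  have hpos : 0 < a ^ 2 + b ^ 2 := by
    have := Complex.normSq_pos.mpr ht
    rwa [Complex.normSq_apply, ← sq, ← sq] at this
  rw [hvre, hvim]
  nlinarith [sq_nonneg (2 * (a^2+b^2) - b₂), sq_nonneg a, sq_nonneg b, sq_nonneg (a^2+b^2),
    mul_pos hpos hpos]
end

section
/- Let b₂ > 0, b₁ = -b₂²/4, and let u : ℝ → ℂ be a function such that at every t ∈ ℝ, u has derivative (b₁ + i)·u(t) + b₂·u(t)·|u(t)|² - u(t)·|u(t)|⁴. Then at every t ∈ ℝ the derivative of t ↦ |u(t)|² is ≤ 0, and it is strictly negative whenever u(t) ≠ 0 and |u(t)|² ≠ b₂/2; i.e., on the curve T the single cycle of radius √(b₂/2) is repulsive on its interior side and attractive on its exterior side. -/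
/-- On the fold curve `T` (`b₂ > 0`, `b₁ = -b₂²/4`), along any solution of the
truncated Bautin normal form the derivative of `|u(t)|²` is `≤ 0` everywhere,
and `< 0` whenever `u(t) ≠ 0` and `|u(t)|² ≠ b₂/2`: the single cycle of radius
`√(b₂/2)` is repulsive inside and attractive outside. -/
theorem stmt16 (b₁ b₂ : ℝ) (hb₂ : 0 < b₂) (hb₁ : b₁ = -b₂ ^ 2 / 4)
    (u : ℝ → ℂ)
    (hu : ∀ t : ℝ, HasDerivAt u
      (((b₁ : ℂ) + Complex.I) * u t + (b₂ : ℂ) * u t * ((‖u t‖) ^ 2 : ℝ)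
        - u t * ((‖u t‖) ^ 4 : ℝ)) t) :
    ∀ t : ℝ, ∃ d : ℝ, HasDerivAt (fun s => (‖u s‖) ^ 2) d t ∧
      d ≤ 0 ∧ (u t ≠ 0 → (‖u t‖) ^ 2 ≠ b₂ / 2 → d < 0) := by
  intro t
  set u' : ℂ := ((b₁ : ℂ) + Complex.I) * u t + (b₂ : ℂ) * u t * ((‖u t‖) ^ 2 : ℝ)
        - u t * ((‖u t‖) ^ 4 : ℝ) with hu'def
  have hre : HasDerivAt (fun s => (u s).re) u'.re t :=
    (Complex.reCLM.hasFDerivAt.comp_hasDerivAt t (hu t))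
  have him : HasDerivAt (fun s => (u s).im) u'.im t :=
    (Complex.imCLM.hasFDerivAt.comp_hasDerivAt t (hu t))
  have hsq : HasDerivAt (fun s => (u s).re ^ 2 + (u s).im ^ 2)
      ((2 : ℕ) * (u t).re ^ 1 * u'.re + (2 : ℕ) * (u t).im ^ 1 * u'.im) t :=
    (hre.pow 2).add (him.pow 2)
  set a := (u t).re with ha
  set b := (u t).im with hb
  have habs : ∀ s : ℝ, (‖u s‖) ^ 2 = (u s).re ^ 2 + (u s).im ^ 2 := by
    intro s
    rw [Complex.sq_norm, Complex.normSq_apply]; ring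
  have hD : HasDerivAt (fun s => (‖u s‖) ^ 2)
      ((2 : ℕ) * a ^ 1 * u'.re + (2 : ℕ) * b ^ 1 * u'.im) t := by
    refine hsq.congr_of_eventuallyEq ?_
    filter_upwards with s using habs s
  set r : ℝ := (‖u t‖) ^ 2 with hr
  have hrab : r = a ^ 2 + b ^ 2 := habs t
  have hDval : (2 : ℕ) * a ^ 1 * u'.re + (2 : ℕ) * b ^ 1 * u'.im
      = -2 * r * (r - b₂ / 2) ^ 2 := by
    have hre' : u'.re = b₁ * a - b + b₂ * r * a - r ^ 2 * a := by
      simp [hu'def, Complex.add_re, Complex.sub_re, Complex.mul_re, Complex.mul_im,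
        Complex.add_im, Complex.I_re, Complex.I_im, ← Complex.ofReal_pow, ← ha, ← hb, ← hr]
      ring
    have him' : u'.im = b₁ * b + a + b₂ * r * b - r ^ 2 * b := by
      simp [hu'def, Complex.add_re, Complex.sub_im, Complex.mul_re, Complex.mul_im,
        Complex.add_im, Complex.I_re, Complex.I_im, ← Complex.ofReal_pow, ← ha, ← hb, ← hr]
      ring
    rw [hre', him', hb₁]
    push_cast
    rw [hrab]
    ring
  rw [hDval] at hD
  refine ⟨-2 * r * (r - b₂ / 2) ^ 2, hD, ?_, ?_⟩
  · have hr0 : 0 ≤ r := by positivity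
    nlinarith [sq_nonneg (r - b₂ / 2)]
  · intro hne hne2
    have hr0 : 0 < r := by
      have : ‖u t‖ ≠ 0 := by simpa using hne
      positivity
    have h2 : (r - b₂ / 2) ^ 2 > 0 := by
      have : r - b₂ / 2 ≠ 0 := sub_ne_zero.mpr hne2
      positivity
    nlinarith
end
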